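/- arXiv:1905.07448 — 2 statements merged into one kernel-verified Lean document; each statement's English description precedes it below -/
import Mathlib

section
/- If after a full round of Bellman-Ford relaxation (processing every arc once) no potential value changes, i.e., d(u) + l(u,v) ≥ d(v) for all arcs (u,v) with d(u) finite, and d(s) = 0 with all finite values achievable by walks from s, then d(v) is exactly the shortest-walk distance from s to v for all v reachable from s, and G contains no negative cycle reachable from s. -/
/-! Along any walk the stability inequality telescopes: `d` at the end of a walk is at most `d`
at its start plus the walk's length. Starting from `d s = 0` this makes `d v` a lower bound for
every walk from `s` to `v`, and `d v` is itself attained by a walk, hence it is the minimum.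
A reachable negative cycle through `c 0` would give `d (c 0) ≤ d (c 0) + (negative)`, with
`d (c 0)` finite. -/

def IsWalk {V : Type*} (A : V → V → Prop) (s t : V) (w : ℕ → V) (k : ℕ) : Prop :=
  w 0 = s ∧ w k = t ∧ ∀ i < k, A (w i) (w (i+1))

noncomputable def walkLen {V : Type*} (l : V → V → ℝ) (w : ℕ → V) (k : ℕ) : ℝ :=
  ∑ i ∈ Finset.range k, l (w i) (w (i+1))

section StablePotential

variable {V : Type*} {A : V → V → Prop} {l : V → V → ℝ} {d : V → EReal}

lemma walkLen_succ (w : ℕ → V) (k : ℕ) :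
    walkLen l w (k + 1) = walkLen l w k + l (w k) (w (k + 1)) :=
  Finset.sum_range_succ _ _

lemma le_add_walkLen_of_stable
    (hstable : ∀ u v : V, A u v → d u ≠ ⊤ → d v ≤ d u + (l u v : EReal))
    {w : ℕ → V} {a : ℝ} (h0 : d (w 0) ≤ a) :
    ∀ k, (∀ i < k, A (w i) (w (i+1))) → d (w k) ≤ ((a + walkLen l w k : ℝ) : EReal)
  | 0, _ => by simpa [walkLen] using h0
  | k + 1, hA => by
    have ih := le_add_walkLen_of_stable hstable h0 k fun i hi => hA i (by omega)
    calc d (w (k + 1)) ≤ d (w k) + (l (w k) (w (k + 1)) : EReal) :=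
          hstable _ _ (hA k (by omega)) (ne_top_of_le_ne_top (EReal.coe_ne_top _) ih)
      _ ≤ ((a + walkLen l w k : ℝ) : EReal) + (l (w k) (w (k + 1)) : EReal) := by gcongr
      _ = ((a + walkLen l w (k + 1) : ℝ) : EReal) := by
          rw [walkLen_succ, ← add_assoc]; push_cast; rfl

lemma le_walkLen_of_isWalk {s v : V} (hds : d s = 0)
    (hstable : ∀ u v : V, A u v → d u ≠ ⊤ → d v ≤ d u + (l u v : EReal))
    {w : ℕ → V} {k : ℕ} (hw : IsWalk A s v w k) : d v ≤ (walkLen l w k : EReal) := by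
  obtain ⟨h0, rfl, hA⟩ := hw
  simpa using le_add_walkLen_of_stable (a := 0) hstable (by simp [h0, hds]) k hA

end StablePotential

theorem stable_potentials_are_distances_and_no_negative_cycle_general {V : Type*}
    (A : V → V → Prop) (l : V → V → ℝ) (s : V) (d : V → EReal)
    (hds : d s = 0)
    (hach : ∀ v : V, d v ≠ ⊤ →
      ∃ (w : ℕ → V) (k : ℕ), IsWalk A s v w k ∧ d v = (walkLen l w k : EReal))
    (hstable : ∀ u v : V, A u v → d u ≠ ⊤ → d v ≤ d u + (l u v : EReal)) :
    (∀ v : V, (∃ (w : ℕ → V) (k : ℕ), IsWalk A s v w k) →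
      ∃ L : ℝ, IsLeast
        {x : ℝ | ∃ (w : ℕ → V) (k : ℕ), IsWalk A s v w k ∧ x = walkLen l w k} L ∧
        d v = (L : EReal)) ∧
    ¬ ∃ (c : ℕ → V) (k : ℕ), 1 ≤ k ∧ c k = c 0 ∧ (∀ i < k, A (c i) (c (i+1))) ∧
      (∑ i ∈ Finset.range k, l (c i) (c (i+1))) < 0 ∧
      ∃ (w : ℕ → V) (m : ℕ), IsWalk A s (c 0) w m := by
  have attained : ∀ v w k, IsWalk A s v w k →
      ∃ w' k', IsWalk A s v w' k' ∧ d v = (walkLen l w' k' : EReal) := fun v w k hw =>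
    hach v (ne_top_of_le_ne_top (EReal.coe_ne_top _) (le_walkLen_of_isWalk hds hstable hw))
  constructor
  · rintro v ⟨w, k, hw⟩
    obtain ⟨w', k', hw', hdv⟩ := attained v w k hw
    refine ⟨walkLen l w' k', ⟨⟨w', k', hw', rfl⟩, ?_⟩, hdv⟩
    rintro _ ⟨w'', k'', hw'', rfl⟩
    exact_mod_cast hdv ▸ le_walkLen_of_isWalk hds hstable hw''
  · rintro ⟨c, k, -, hcyc, hAc, hneg, w, m, hw⟩
    obtain ⟨w', k', -, hdv⟩ := attained (c 0) w m hw
    have hround := le_add_walkLen_of_stable hstable hdv.le k hAc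
    rw [hcyc, hdv, EReal.coe_le_coe_iff] at hround
    exact ((le_add_iff_nonneg_right _).mp hround).not_gt hneg

theorem stable_potentials_are_distances_and_no_negative_cycle {V : Type*} [Fintype V]
    (A : V → V → Prop) (l : V → V → ℝ) (s : V) (d : V → EReal)
    (hds : d s = 0)
    (hach : ∀ v : V, d v ≠ ⊤ →
      ∃ (w : ℕ → V) (k : ℕ), IsWalk A s v w k ∧ d v = (walkLen l w k : EReal))
    (hstable : ∀ u v : V, A u v → d u ≠ ⊤ → d v ≤ d u + (l u v : EReal)) :
    (∀ v : V, (∃ (w : ℕ → V) (k : ℕ), IsWalk A s v w k) →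
      ∃ L : ℝ, IsLeast
        {x : ℝ | ∃ (w : ℕ → V) (k : ℕ), IsWalk A s v w k ∧ x = walkLen l w k} L ∧
        d v = (L : EReal)) ∧
    ¬ ∃ (c : ℕ → V) (k : ℕ), 1 ≤ k ∧ c k = c 0 ∧ (∀ i < k, A (c i) (c (i+1))) ∧
      (∑ i ∈ Finset.range k, l (c i) (c (i+1))) < 0 ∧
      ∃ (w : ℕ → V) (m : ℕ), IsWalk A s (c 0) w m :=
  stable_potentials_are_distances_and_no_negative_cycle_general A l s d hds hach hstable
end

section
/- If a graph has a negative cycle reachable from the source, then for any Bellman-Ford-style process where in each round all arcs are relaxed, there is at least one strict potential decrease in every round; in particular after n rounds some vertex v on or after the cycle satisfies d(v) < dist over simple paths, so the process never reaches a fixed point. -/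
theorem bellman_ford_never_stabilizes_with_negative_cycle {V : Type*} [Fintype V]
    (A : V → V → Prop) (l : V → V → ℝ) (s : V) (d : ℕ → V → EReal)
    (h0s : d 0 s = 0) (h0 : ∀ v ≠ s, d 0 v = ⊤)
    (hstep : ∀ (r : ℕ) (v : V), d (r+1) v =
      min (d r v) (sInf {x : EReal | ∃ u : V, A u v ∧ x = d r u + (l u v : EReal)}))
    (c : ℕ → V) (k : ℕ) (hk : 1 ≤ k) (hcyc : c k = c 0)
    (harcs : ∀ i < k, A (c i) (c (i+1)))
    (hneg : ∑ i ∈ Finset.range k, l (c i) (c (i+1)) < 0)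
    (hreach : ∃ (w : ℕ → V) (m : ℕ), IsWalk A s (c 0) w m) :
    ∀ r : ℕ, ∃ v : V, d (r+1) v < d r v := by
  -- monotonicity
  have hmono : ∀ (r : ℕ) (v : V), d (r+1) v ≤ d r v := by
    intro r v; rw [hstep]; exact min_le_left _ _
  -- never ⊥
  have hnobot : ∀ (r : ℕ) (v : V), d r v ≠ ⊥ := by
    intro r
    induction r with
    | zero =>
      intro v
      by_cases hv : v = s
      · subst hv; rw [h0s]; simp
      · rw [h0 v hv]; simp
    | succ r ih =>
      intro v
      rw [hstep]
      set S : Set EReal := {x : EReal | ∃ u : V, A u v ∧ x = d r u + (l u v : EReal)} with hS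
      have hSfin : S.Finite := by
        have : S ⊆ (fun u : V => d r u + (l u v : EReal)) '' Set.univ := by
          rintro x ⟨u, _, rfl⟩; exact ⟨u, Set.mem_univ u, rfl⟩
        exact Set.Finite.subset (Set.finite_univ.image _) this
      have hSne : sInf S ≠ ⊥ := by
        rcases Set.eq_empty_or_nonempty S with h | h
        · rw [h, sInf_empty]; simp
        · have := h.csInf_mem hSfin
          rcases this with ⟨u, _, hu⟩
          rw [hu]
          simp [EReal.add_eq_bot_iff, ih u]
      intro hmin
      rcases min_eq_iff.mp hmin with ⟨h1, _⟩ | ⟨h1, _⟩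
      · exact ih v h1
      · exact hSne h1
  intro r
  by_contra hno
  push_neg at hno
  -- d r is a fixed point
  have hfix : ∀ (u v : V), A u v → d r v ≤ d r u + (l u v : EReal) := by
    intro u v huv
    have heq : d (r+1) v = d r v := le_antisymm (hmono r v) (hno v)
    have : d r v ≤ sInf {x : EReal | ∃ u : V, A u v ∧ x = d r u + (l u v : EReal)} := by
      rw [← heq, hstep]
      exact min_le_right _ _
    exact this.trans (sInf_le ⟨u, huv, rfl⟩)
  -- d r s ≤ 0
  have hds : d r s ≤ 0 := by
    have : ∀ q : ℕ, d q s ≤ 0 := by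
      intro q
      induction q with
      | zero => rw [h0s]
      | succ q ih => exact (hmono q s).trans ih
    exact this r
  -- chain lemma
  have hchain : ∀ (w : ℕ → V) (m : ℕ), (∀ i < m, A (w i) (w (i+1))) →
      d r (w m) ≤ d r (w 0) + ((∑ i ∈ Finset.range m, l (w i) (w (i+1)) : ℝ) : EReal) := by
    intro w m hw
    induction m with
    | zero => simp
    | succ m ih =>
      have ih' := ih (fun i hi => hw i (hi.trans (Nat.lt_succ_self m)))
      calc d r (w (m+1)) ≤ d r (w m) + (l (w m) (w (m+1)) : EReal) :=
            hfix _ _ (hw m (Nat.lt_succ_self m))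
        _ ≤ (d r (w 0) + ((∑ i ∈ Finset.range m, l (w i) (w (i+1)) : ℝ) : EReal))
              + (l (w m) (w (m+1)) : EReal) := add_le_add_left ih' _
        _ = d r (w 0) + ((∑ i ∈ Finset.range (m+1), l (w i) (w (i+1)) : ℝ) : EReal) := by
            rw [Finset.sum_range_succ, EReal.coe_add, add_assoc]
  -- finiteness of d r (c 0)
  obtain ⟨w, m, hw0, hwm, hwarcs⟩ := hreach
  have hc0top : d r (c 0) ≠ ⊤ := by
    have h1 := hchain w m hwarcs
    rw [hw0, hwm] at h1
    have h2 : d r (c 0) ≤ ((∑ i ∈ Finset.range m, l (w i) (w (i+1)) : ℝ) : EReal) := by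
      calc d r (c 0) ≤ d r s + _ := h1
        _ ≤ 0 + ((∑ i ∈ Finset.range m, l (w i) (w (i+1)) : ℝ) : EReal) :=
            add_le_add_left hds _
        _ = _ := zero_add _
    intro h
    simp [h] at h2
  obtain ⟨a, ha⟩ : ∃ a : ℝ, d r (c 0) = (a : EReal) := by
    lift d r (c 0) to ℝ using ⟨hc0top, hnobot r (c 0)⟩ with a
    exact ⟨a, rfl⟩
  -- cycle contradiction
  have hcy := hchain c k harcs
  rw [hcyc, ha] at hcy
  rw [← EReal.coe_add] at hcy
  have := EReal.coe_le_coe_iff.mp hcy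
  linarith
end
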